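/- Let A be an n×n real matrix whose characteristic polynomial is λⁿ + a₁λ^{n−1} + ⋯ + aₙ, and let C, Ψ, Φ be as defined. Then ΨΦ A = C ΨΦ. In particular, if Φ is invertible then Q = ΨΦ conjugates A to the companion matrix C: Q A Q⁻¹ = C. -/

import Mathlib

/-!
Row `i` of `ΨΦ` (counting from `0`) is `e₁ᵀ pᵢ(A)`, where `pᵢ = Xⁱ + a₁Xⁱ⁻¹ + ⋯ + aᵢ` is the
`i`-th Horner prefix of the characteristic polynomial. Since `pᵢ₊₁ = pᵢ X + aᵢ₊₁`, row `i` of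
`ΨΦ A` is `e₁ᵀ pᵢ₊₁(A) − aᵢ₊₁ e₁ᵀ`, and so is row `i` of `C ΨΦ = (J − a e₁ᵀ) ΨΦ`: for `i < n − 1`
it is row `i + 1` of `ΨΦ` minus `aᵢ₊₁` times row `0`, and for the last row `pₙ(A) = χ_A(A) = 0`
by Cayley–Hamilton. As `Ψ` is unitriangular, `ΨΦ` is invertible whenever `Φ` is.
-/

open Matrix Polynomial

/-- The `n×n` companion matrix with first column `(−a₁,…,−aₙ)ᵀ` and
superdiagonal ones (`a i` encodes `a_{i+1}`). -/
def compC {n : ℕ} (a : Fin (n + 1) → ℝ) : Matrix (Fin (n + 1)) (Fin (n + 1)) ℝ :=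
  Matrix.of fun i j =>
    if (j : ℕ) = 0 then -a i else if (j : ℕ) = (i : ℕ) + 1 then 1 else 0

/-- The lower-triangular matrix `Ψ` with unit diagonal and `Ψ_{ij} = a_{i−j}`
for `i > j`. -/
def psiM {n : ℕ} (a : Fin (n + 1) → ℝ) : Matrix (Fin (n + 1)) (Fin (n + 1)) ℝ :=
  Matrix.of fun i j =>
    if (i : ℕ) = (j : ℕ) then 1
    else if (j : ℕ) < (i : ℕ) then
      a ⟨(i : ℕ) - (j : ℕ) - 1,
        lt_of_le_of_lt (le_trans (Nat.sub_le _ _) (Nat.sub_le _ _)) i.isLt⟩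
    else 0

/-- The observability matrix `Φ` whose `i`-th row is `e₁ᵀ A^{i−1}`. -/
noncomputable def phiM {n : ℕ} (A : Matrix (Fin (n + 1)) (Fin (n + 1)) ℝ) :
    Matrix (Fin (n + 1)) (Fin (n + 1)) ℝ :=
  Matrix.of fun i j => (A ^ (i : ℕ)) 0 j

/-- The nilpotent shift matrix `J` with superdiagonal ones. -/
def shiftJ (n : ℕ) : Matrix (Fin (n + 1)) (Fin (n + 1)) ℝ :=
  Matrix.of fun i j => if (j : ℕ) = (i : ℕ) + 1 then 1 else 0

section Horner

variable {R : Type*} [CommRing R]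

noncomputable def hornerPrefix (b : ℕ → R) (m : ℕ) : R[X] :=
  X ^ m + ∑ k ∈ Finset.range m, C (b (m - k - 1)) * X ^ k

@[simp]
theorem hornerPrefix_zero (b : ℕ → R) : hornerPrefix b 0 = 1 := by
  simp [hornerPrefix]

theorem hornerPrefix_succ (b : ℕ → R) (m : ℕ) :
    hornerPrefix b (m + 1) = hornerPrefix b m * X + C (b m) := by
  simp only [hornerPrefix, Finset.sum_range_succ', add_mul, Finset.sum_mul, pow_succ, mul_assoc,
    Nat.add_sub_cancel, Nat.sub_zero, pow_zero, mul_one]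
  have h : ∀ k, m + 1 - (k + 1) - 1 = m - k - 1 := fun k => by omega
  simp only [h]
  ring

theorem hornerPrefix_eq_sum_reflect (b : ℕ → R) (m : ℕ) :
    hornerPrefix b m = X ^ m + ∑ i ∈ Finset.range m, C (b i) * X ^ (m - 1 - i) := by
  rw [hornerPrefix, ← Finset.sum_range_reflect]
  congr 1
  refine Finset.sum_congr rfl fun k hk => ?_
  rw [Finset.mem_range] at hk
  congr 3; omega

theorem coeff_hornerPrefix (b : ℕ → R) (m k : ℕ) :
    (hornerPrefix b m).coeff k = if k = m then 1 else if k < m then b (m - k - 1) else 0 := by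
  simp only [hornerPrefix, coeff_add, coeff_X_pow, finsetSum_coeff, coeff_C_mul_X_pow,
    Finset.sum_ite_eq, Finset.mem_range]
  split_ifs <;> first | omega | simp

theorem natDegree_hornerPrefix_le (b : ℕ → R) (m : ℕ) :
    (hornerPrefix b m).natDegree ≤ m := by
  rw [natDegree_le_iff_coeff_eq_zero]
  intro k hk
  rw [coeff_hornerPrefix, if_neg (by omega), if_neg (by omega)]

theorem hornerPrefix_succ_eq_fin_sum {n : ℕ} {a : Fin (n + 1) → R} {b : ℕ → R}
    (hb : ∀ i : Fin (n + 1), b i = a i) :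
    hornerPrefix b (n + 1) = X ^ (n + 1) + ∑ i : Fin (n + 1), C (a i) * X ^ (n - (i : ℕ)) := by
  rw [hornerPrefix_eq_sum_reflect,
    ← Fin.sum_univ_eq_sum_range (fun i => C (b i) * X ^ (n + 1 - 1 - i))]
  simp only [hb, Nat.add_sub_cancel]

end Horner

section Companion

variable {n : ℕ}

theorem compC_eq_shiftJ_sub (a : Fin (n + 1) → ℝ) :
    compC a = shiftJ n - vecMulVec a (Pi.single 0 1) := by
  ext i j
  rcases Fin.eq_zero_or_eq_succ j with rfl | ⟨j, rfl⟩ <;> simp [compC, shiftJ, vecMulVec_apply]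

theorem shiftJ_mul_apply (Q : Matrix (Fin (n + 1)) (Fin (n + 1)) ℝ) (i j : Fin (n + 1)) :
    (shiftJ n * Q) i j = if h : (i : ℕ) + 1 < n + 1 then Q ⟨i + 1, h⟩ j else 0 := by
  rw [mul_apply]
  split_ifs with h
  · rw [Finset.sum_eq_single ⟨i + 1, h⟩]
    · simp [shiftJ]
    · intro l _ hl
      simp only [shiftJ, of_apply, ite_mul, one_mul, zero_mul]
      exact if_neg fun h' => hl (Fin.ext h')
    · simp
  · refine Finset.sum_eq_zero fun l _ => ?_
    simp only [shiftJ, of_apply, ite_mul, one_mul, zero_mul]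
    exact if_neg (by omega)

theorem det_psiM (a : Fin (n + 1) → ℝ) : (psiM a).det = 1 := by
  rw [det_of_isLowerTriangular]
  · simp [psiM]
  · intro p q hpq
    have : (p : ℕ) < q := hpq
    simp only [psiM, of_apply]
    rw [if_neg (by omega), if_neg (by omega)]

variable {a : Fin (n + 1) → ℝ} {b : ℕ → ℝ} {A : Matrix (Fin (n + 1)) (Fin (n + 1)) ℝ}

theorem psiM_apply_eq_coeff (hb : ∀ i : Fin (n + 1), b i = a i) (i k : Fin (n + 1)) :
    psiM a i k = (hornerPrefix b i).coeff k := by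
  rw [coeff_hornerPrefix]
  simp only [psiM, of_apply, eq_comm (a := (i : ℕ))]
  split_ifs <;> simp [← hb]

theorem psiM_mul_phiM_apply (hb : ∀ i : Fin (n + 1), b i = a i) (i j : Fin (n + 1)) :
    (psiM a * phiM A) i j = aeval A (hornerPrefix b i) 0 j := by
  have hdeg : (hornerPrefix b i).natDegree < n + 1 :=
    (natDegree_hornerPrefix_le b i).trans_lt i.isLt
  rw [aeval_eq_sum_range' hdeg,
    ← Fin.sum_univ_eq_sum_range (fun k => (hornerPrefix b i).coeff k • A ^ k), mul_apply,
    Matrix.sum_apply]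
  simp [psiM_apply_eq_coeff hb, phiM]

theorem psiM_mul_phiM_mul_apply (hb : ∀ i : Fin (n + 1), b i = a i) (i j : Fin (n + 1)) :
    (psiM a * phiM A * A) i j = aeval A (hornerPrefix b (i + 1) - C (a i)) 0 j := by
  rw [hornerPrefix_succ, hb, add_sub_cancel_right, map_mul, aeval_X, mul_apply, mul_apply]
  simp_rw [psiM_mul_phiM_apply hb]

theorem compC_mul_psiM_mul_phiM_apply (hb : ∀ i : Fin (n + 1), b i = a i)
    (hCH : aeval A (hornerPrefix b (n + 1)) = 0) (i j : Fin (n + 1)) :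
    (compC a * (psiM a * phiM A)) i j = aeval A (hornerPrefix b (i + 1) - C (a i)) 0 j := by
  rw [compC_eq_shiftJ_sub, sub_mul, vecMulVec_mul, single_vecMul, Matrix.sub_apply,
    shiftJ_mul_apply, vecMulVec_apply]
  simp only [psiM_mul_phiM_apply hb, one_smul, row_apply, Fin.val_zero, hornerPrefix_zero,
    map_one, map_sub, aeval_C, Algebra.algebraMap_eq_smul_one, Matrix.sub_apply, Matrix.smul_apply,
    smul_eq_mul]
  split_ifs with h
  · rfl
  · rw [show (i : ℕ) + 1 = n + 1 by omega, hCH, Matrix.zero_apply]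

end Companion

/-- `ΨΦ A = C ΨΦ`; in particular, if `Φ` is invertible then `Q = ΨΦ`
conjugates `A` to the companion matrix `C`. -/
theorem psiPhi_conjugates (n : ℕ) (a : Fin (n + 1) → ℝ)
    (A : Matrix (Fin (n + 1)) (Fin (n + 1)) ℝ)
    (hchar : A.charpoly
      = X ^ (n + 1) + ∑ i : Fin (n + 1), C (a i) * X ^ (n - (i : ℕ))) :
    psiM a * phiM A * A = compC a * (psiM a * phiM A) ∧
      (IsUnit (phiM A).det →
        (psiM a * phiM A) * A * (psiM a * phiM A)⁻¹ = compC a) := by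
  set b : ℕ → ℝ := fun m => if h : m < n + 1 then a ⟨m, h⟩ else 0
  have hb : ∀ i : Fin (n + 1), b i = a i := fun i => dif_pos i.isLt
  have hCH : aeval A (hornerPrefix b (n + 1)) = 0 := by
    rw [hornerPrefix_succ_eq_fin_sum hb, ← hchar, aeval_self_charpoly]
  have hintertwine : psiM a * phiM A * A = compC a * (psiM a * phiM A) := by
    ext i j
    rw [psiM_mul_phiM_mul_apply hb, compC_mul_psiM_mul_phiM_apply hb hCH]
  refine ⟨hintertwine, fun hΦ => ?_⟩
  have hQ : IsUnit (psiM a * phiM A).det := by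
    rw [det_mul, det_psiM, one_mul]
    exact hΦ
  rw [hintertwine, Matrix.mul_assoc, mul_nonsing_inv _ hQ, Matrix.mul_one]
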